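/- Let g: ℝ → [0,∞) be Lipschitz continuous with constant L. Let Y, S₀, S₁, S₀', S₁' be random variables in L^2(Ω) with S₀, S₀' ≥ 1/2 a.s. and S₀, S₀', S₁, S₁' essentially bounded. Then for every x ∈ ℝ, | E[ g((x − Y S₁')/S₀') / S₀' ] − E[ g((x − Y S₁)/S₀) / S₀ ] | ≤ C ( (|x| + 1) ‖S₀' − S₀‖_∞ + ‖Y‖_{L^2} ‖S₁' − S₁‖_∞ ), where C is a constant depending only on L, the essential bounds of S₀, S₀', S₁, S₁', and sup g on the relevant range (in particular on the L^2 norm of Y). -/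

import Mathlib

open MeasureTheory
open scoped ENNReal NNReal

lemma ae_abs_le_toReal {Ω : Type*} [MeasurableSpace Ω] {μ : Measure Ω} {f : Ω → ℝ}
    (hf : MemLp f ∞ μ) : ∀ᵐ ω ∂μ, |f ω| ≤ (eLpNorm f ∞ μ).toReal := by
  have hfin : eLpNormEssSup f μ ≠ ⊤ := by
    rw [← eLpNorm_exponent_top]; exact hf.2.ne
  filter_upwards [ae_le_eLpNormEssSup (f := f) (μ := μ)] with ω hω
  have := ENNReal.toReal_mono hfin hω
  rw [eLpNorm_exponent_top]
  simpa [Real.norm_eq_abs] using this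

set_option linter.unreachableTactic false in
set_option linter.unusedTactic false in
lemma key_pointwise (g : ℝ → ℝ) (L : ℝ≥0) (hg_lip : LipschitzWith L g)
    (hg_nonneg : ∀ y, 0 ≤ g y) (M : ℝ) (hg_bdd : ∀ y, g y ≤ M)
    (x y s₀ s₁ s₀' s₁' b₀ b₁ d₀ d₁ : ℝ)
    (hs₀ : 1/2 ≤ s₀) (hs₀' : 1/2 ≤ s₀')
    (hb₀ : |s₀| ≤ b₀) (hb₁ : |s₁| ≤ b₁)
    (hd₀ : |s₀' - s₀| ≤ d₀) (hd₁ : |s₁' - s₁| ≤ d₁) :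
    |g ((x - y * s₁') / s₀') / s₀' - g ((x - y * s₁) / s₀) / s₀|
      ≤ (8 * L * |x| * d₀ + 4 * M * d₀) + |y| * (8 * L * (b₀ * d₁ + b₁ * d₀)) := by
  have hM0 : (0:ℝ) ≤ M := (hg_nonneg 0).trans (hg_bdd 0)
  have hs₀pos : (0:ℝ) < s₀ := lt_of_lt_of_le (by norm_num) hs₀
  have hs₀'pos : (0:ℝ) < s₀' := lt_of_lt_of_le (by norm_num) hs₀'
  have hd₀0 : (0:ℝ) ≤ d₀ := (abs_nonneg _).trans hd₀
  have hd₁0 : (0:ℝ) ≤ d₁ := (abs_nonneg _).trans hd₁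
  have hb₀0 : (0:ℝ) ≤ b₀ := (abs_nonneg _).trans hb₀
  have hb₁0 : (0:ℝ) ≤ b₁ := (abs_nonneg _).trans hb₁
  have h4 : (1:ℝ)/4 ≤ s₀ * s₀' := by nlinarith
  set a := (x - y * s₁) / s₀ with ha
  set a' := (x - y * s₁') / s₀' with ha'
  have h1 : |s₀ - s₀'| ≤ d₀ := by rwa [abs_sub_comm]
  have hnum : |x * (s₀ - s₀') - y * (s₀ * (s₁' - s₁) + s₁ * (s₀ - s₀'))|
      ≤ |x| * d₀ + |y| * (b₀ * d₁ + b₁ * d₀) := by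
    calc |x * (s₀ - s₀') - y * (s₀ * (s₁' - s₁) + s₁ * (s₀ - s₀'))|
        ≤ |x * (s₀ - s₀')| + |y * (s₀ * (s₁' - s₁) + s₁ * (s₀ - s₀'))| := abs_sub _ _
      _ ≤ |x| * |s₀ - s₀'| + |y| * (|s₀| * |s₁' - s₁| + |s₁| * |s₀ - s₀'|) := by
          rw [abs_mul, abs_mul]
          gcongr
          calc |s₀ * (s₁' - s₁) + s₁ * (s₀ - s₀')|
              ≤ |s₀ * (s₁' - s₁)| + |s₁ * (s₀ - s₀')| := abs_add_le _ _
            _ = |s₀| * |s₁' - s₁| + |s₁| * |s₀ - s₀'| := by rw [abs_mul, abs_mul]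
      _ ≤ |x| * d₀ + |y| * (b₀ * d₁ + b₁ * d₀) := by
          gcongr <;> first | exact h1 | assumption
  have hdiff : a' - a
      = (x * (s₀ - s₀') - y * (s₀ * (s₁' - s₁) + s₁ * (s₀ - s₀'))) / (s₀ * s₀') := by
    rw [ha, ha']; field_simp; ring
  have haa : |a' - a| ≤ 4 * (|x| * d₀ + |y| * (b₀ * d₁ + b₁ * d₀)) := by
    rw [hdiff, abs_div, abs_of_pos (mul_pos hs₀pos hs₀'pos),
      div_le_iff₀ (mul_pos hs₀pos hs₀'pos)]
    calc |x * (s₀ - s₀') - y * (s₀ * (s₁' - s₁) + s₁ * (s₀ - s₀'))|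
        ≤ |x| * d₀ + |y| * (b₀ * d₁ + b₁ * d₀) := hnum
      _ = 4 * (|x| * d₀ + |y| * (b₀ * d₁ + b₁ * d₀)) * (1/4) := by ring
      _ ≤ 4 * (|x| * d₀ + |y| * (b₀ * d₁ + b₁ * d₀)) * (s₀ * s₀') := by gcongr
  have hglip : |g a' - g a| ≤ L * |a' - a| := by
    have := hg_lip.dist_le_mul a' a
    rwa [Real.dist_eq, Real.dist_eq] at this
  have hsplit : g a' / s₀' - g a / s₀
      = (g a' - g a) / s₀' + g a * ((s₀ - s₀') / (s₀ * s₀')) := by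
    field_simp; ring
  have h2 : |(g a' - g a) / s₀'| ≤ 2 * (L * |a' - a|) := by
    rw [abs_div, abs_of_pos hs₀'pos, div_le_iff₀ hs₀'pos]
    nlinarith [abs_nonneg (g a' - g a), mul_nonneg (L.coe_nonneg) (abs_nonneg (a' - a))]
  have h3 : |g a * ((s₀ - s₀') / (s₀ * s₀'))| ≤ 4 * M * d₀ := by
    rw [abs_mul, abs_div, abs_of_pos (mul_pos hs₀pos hs₀'pos)]
    have hga : |g a| ≤ M := by rw [abs_of_nonneg (hg_nonneg a)]; exact hg_bdd a
    have h5 : |s₀ - s₀'| / (s₀ * s₀') ≤ 4 * d₀ := by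
      rw [div_le_iff₀ (mul_pos hs₀pos hs₀'pos)]
      calc |s₀ - s₀'| ≤ d₀ := h1
        _ = 4 * d₀ * (1/4) := by ring
        _ ≤ 4 * d₀ * (s₀ * s₀') := by gcongr
    calc |g a| * (|s₀ - s₀'| / (s₀ * s₀')) ≤ M * (4 * d₀) :=
          mul_le_mul hga h5 (by positivity) hM0
      _ = 4 * M * d₀ := by ring
  calc |g a' / s₀' - g a / s₀|
      = |(g a' - g a) / s₀' + g a * ((s₀ - s₀') / (s₀ * s₀'))| := by rw [hsplit]
    _ ≤ |(g a' - g a) / s₀'| + |g a * ((s₀ - s₀') / (s₀ * s₀'))| := abs_add_le _ _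
    _ ≤ 2 * (L * |a' - a|) + 4 * M * d₀ := add_le_add h2 h3
    _ ≤ 2 * (L * (4 * (|x| * d₀ + |y| * (b₀ * d₁ + b₁ * d₀)))) + 4 * M * d₀ := by gcongr
    _ = (8 * L * |x| * d₀ + 4 * M * d₀) + |y| * (8 * L * (b₀ * d₁ + b₁ * d₀)) := by ring


set_option maxHeartbeats 1000000 in
/-- lipschitz stability estimate for the approximate densities:
`|E[g((x − Y S₁')/S₀')/S₀'] − E[g((x − Y S₁)/S₀)/S₀]|
  ≤ C((|x| + 1)‖S₀' − S₀‖_∞ + ‖Y‖_{L²}‖S₁' − S₁‖_∞)`. -/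
theorem lipschitz_density_estimate
    {Ω : Type*} [MeasurableSpace Ω] (μ : Measure Ω) [IsProbabilityMeasure μ]
    (g : ℝ → ℝ) (L : ℝ≥0) (hg_lip : LipschitzWith L g) (hg_nonneg : ∀ y, 0 ≤ g y)
    (M : ℝ) (hg_bdd : ∀ y, g y ≤ M)
    (Y S₀ S₁ S₀' S₁' : Ω → ℝ)
    (hY : MemLp Y 2 μ)
    (hS₀ : MemLp S₀ ∞ μ) (hS₁ : MemLp S₁ ∞ μ)
    (hS₀' : MemLp S₀' ∞ μ) (hS₁' : MemLp S₁' ∞ μ)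
    (hS₀_lb : ∀ᵐ ω ∂μ, (1 : ℝ) / 2 ≤ S₀ ω)
    (hS₀'_lb : ∀ᵐ ω ∂μ, (1 : ℝ) / 2 ≤ S₀' ω) :
    ∃ C : ℝ, 0 < C ∧ ∀ x : ℝ,
      |(∫ ω, g ((x - Y ω * S₁' ω) / S₀' ω) / S₀' ω ∂μ) -
          ∫ ω, g ((x - Y ω * S₁ ω) / S₀ ω) / S₀ ω ∂μ| ≤
        C * ((|x| + 1) * (eLpNorm (fun ω => S₀' ω - S₀ ω) ∞ μ).toReal +
          (eLpNorm Y 2 μ).toReal * (eLpNorm (fun ω => S₁' ω - S₁ ω) ∞ μ).toReal) := by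
  have hM0 : (0:ℝ) ≤ M := (hg_nonneg 0).trans (hg_bdd 0)
  set B₀ := (eLpNorm S₀ ∞ μ).toReal with hB₀def
  set B₁ := (eLpNorm S₁ ∞ μ).toReal with hB₁def
  set d₀ := (eLpNorm (fun ω => S₀' ω - S₀ ω) ∞ μ).toReal with hd₀def
  set d₁ := (eLpNorm (fun ω => S₁' ω - S₁ ω) ∞ μ).toReal with hd₁def
  set N := (eLpNorm Y 2 μ).toReal with hNdef
  have hB₀0 : 0 ≤ B₀ := ENNReal.toReal_nonneg
  have hB₁0 : 0 ≤ B₁ := ENNReal.toReal_nonneg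
  have hd₀0 : 0 ≤ d₀ := ENNReal.toReal_nonneg
  have hd₁0 : 0 ≤ d₁ := ENNReal.toReal_nonneg
  have hN0 : 0 ≤ N := ENNReal.toReal_nonneg
  -- a.e. bounds
  have hb₀ae : ∀ᵐ ω ∂μ, |S₀ ω| ≤ B₀ := ae_abs_le_toReal hS₀
  have hb₁ae : ∀ᵐ ω ∂μ, |S₁ ω| ≤ B₁ := ae_abs_le_toReal hS₁
  have hd₀ae : ∀ᵐ ω ∂μ, |S₀' ω - S₀ ω| ≤ d₀ := ae_abs_le_toReal (hS₀'.sub hS₀)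
  have hd₁ae : ∀ᵐ ω ∂μ, |S₁' ω - S₁ ω| ≤ d₁ := ae_abs_le_toReal (hS₁'.sub hS₁)
  -- Y is integrable and E|Y| ≤ N
  have hYint : Integrable Y μ := hY.integrable (by norm_num)
  have hEY : ∫ ω, |Y ω| ∂μ ≤ N := by
    have h1 : eLpNorm Y 1 μ ≤ eLpNorm Y 2 μ :=
      eLpNorm_le_eLpNorm_of_exponent_le (by norm_num) hY.1
    have h2 : ∫ ω, |Y ω| ∂μ = (eLpNorm Y 1 μ).toReal := by
      simp_rw [← Real.norm_eq_abs]
      rw [integral_norm_eq_lintegral_enorm hY.1, eLpNorm_one_eq_lintegral_enorm]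
    rw [h2]
    exact ENNReal.toReal_mono hY.2.ne h1
  have hEY0 : 0 ≤ ∫ ω, |Y ω| ∂μ := integral_nonneg fun ω => abs_nonneg _
  refine ⟨8 * L * (1 + N * B₁ + B₀) + 4 * M + 1, by positivity, fun x => ?_⟩
  -- measurability of the integrands
  have haesm : ∀ (T₀ T₁ : Ω → ℝ), MemLp T₀ ∞ μ → MemLp T₁ ∞ μ →
      AEStronglyMeasurable (fun ω => g ((x - Y ω * T₁ ω) / T₀ ω) / T₀ ω) μ := by
    intro T₀ T₁ h0 h1
    have hin : AEMeasurable (fun ω => (x - Y ω * T₁ ω) / T₀ ω) μ :=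
      (aemeasurable_const.sub (hY.1.aemeasurable.mul h1.1.aemeasurable)).div
        h0.1.aemeasurable
    exact ((hg_lip.continuous.measurable.comp_aemeasurable hin).div h0.1.aemeasurable).aestronglyMeasurable
  have hmeas := haesm S₀ S₁ hS₀ hS₁
  have hmeas' := haesm S₀' S₁' hS₀' hS₁'
  -- integrability of the integrands (bounded by 2M)
  have hintble : ∀ (T₀ T₁ : Ω → ℝ) (h0 : MemLp T₀ ∞ μ) (h1 : MemLp T₁ ∞ μ),
      (∀ᵐ ω ∂μ, (1:ℝ)/2 ≤ T₀ ω) →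
      Integrable (fun ω => g ((x - Y ω * T₁ ω) / T₀ ω) / T₀ ω) μ := by
    intro T₀ T₁ h0 h1 hlb
    refine Integrable.mono' (integrable_const (2 * M)) (haesm T₀ T₁ h0 h1) ?_
    filter_upwards [hlb] with ω hω
    have hpos : (0:ℝ) < T₀ ω := lt_of_lt_of_le (by norm_num) hω
    rw [Real.norm_eq_abs, abs_of_nonneg (div_nonneg (hg_nonneg _) hpos.le),
      div_le_iff₀ hpos]
    nlinarith [hg_bdd ((x - Y ω * T₁ ω) / T₀ ω), hg_nonneg ((x - Y ω * T₁ ω) / T₀ ω)]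
  have hint := hintble S₀ S₁ hS₀ hS₁ hS₀_lb
  have hint' := hintble S₀' S₁' hS₀' hS₁' hS₀'_lb
  -- the dominating function
  set bound : Ω → ℝ :=
    fun ω => (8 * L * |x| * d₀ + 4 * M * d₀) + |Y ω| * (8 * L * (B₀ * d₁ + B₁ * d₀))
    with hbdef
  have hbint : Integrable bound μ :=
    (integrable_const _).add (hYint.abs.mul_const _)
  have hbound : ∀ᵐ ω ∂μ,
      |g ((x - Y ω * S₁' ω) / S₀' ω) / S₀' ω - g ((x - Y ω * S₁ ω) / S₀ ω) / S₀ ω|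
        ≤ bound ω := by
    filter_upwards [hS₀_lb, hS₀'_lb, hb₀ae, hb₁ae, hd₀ae, hd₁ae] with ω h1 h2 h3 h4 h5 h6
    exact key_pointwise g L hg_lip hg_nonneg M hg_bdd x (Y ω) (S₀ ω) (S₁ ω) (S₀' ω)
      (S₁' ω) B₀ B₁ d₀ d₁ h1 h2 h3 h4 h5 h6
  -- main estimate
  have hstep : |(∫ ω, g ((x - Y ω * S₁' ω) / S₀' ω) / S₀' ω ∂μ) -
      ∫ ω, g ((x - Y ω * S₁ ω) / S₀ ω) / S₀ ω ∂μ| ≤ ∫ ω, bound ω ∂μ := by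
    rw [← integral_sub hint' hint]
    calc |∫ ω, (g ((x - Y ω * S₁' ω) / S₀' ω) / S₀' ω
            - g ((x - Y ω * S₁ ω) / S₀ ω) / S₀ ω) ∂μ|
        ≤ ∫ ω, |g ((x - Y ω * S₁' ω) / S₀' ω) / S₀' ω
            - g ((x - Y ω * S₁ ω) / S₀ ω) / S₀ ω| ∂μ := by
          simpa [Real.norm_eq_abs] using
            norm_integral_le_integral_norm (fun ω => g ((x - Y ω * S₁' ω) / S₀' ω) / S₀' ω
              - g ((x - Y ω * S₁ ω) / S₀ ω) / S₀ ω) (μ := μ)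
      _ ≤ ∫ ω, bound ω ∂μ := integral_mono_ae ((hint'.sub hint).abs) hbint hbound
  have hbval : ∫ ω, bound ω ∂μ
      = (8 * L * |x| * d₀ + 4 * M * d₀) + (∫ ω, |Y ω| ∂μ) * (8 * L * (B₀ * d₁ + B₁ * d₀)) := by
    rw [hbdef]
    rw [integral_add (integrable_const _) (hYint.abs.mul_const _),
      integral_const, integral_mul_const]
    simp
  refine hstep.trans ?_
  rw [hbval]
  have hxx : (0:ℝ) ≤ |x| := abs_nonneg x
  have hL0 : (0:ℝ) ≤ (L:ℝ) := L.coe_nonneg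
  nlinarith [mul_le_mul_of_nonneg_right hEY (by positivity : (0:ℝ) ≤ 8 * (L:ℝ) * B₀ * d₁),
    mul_le_mul_of_nonneg_right hEY (by positivity : (0:ℝ) ≤ 8 * (L:ℝ) * B₁ * d₀),
    (by positivity : (0:ℝ) ≤ (L:ℝ) * d₀),
    (by positivity : (0:ℝ) ≤ (L:ℝ) * |x| * d₀),
    (by positivity : (0:ℝ) ≤ (L:ℝ) * B₀ * d₀),
    (by positivity : (0:ℝ) ≤ (L:ℝ) * B₀ * |x| * d₀),
    (by positivity : (0:ℝ) ≤ (L:ℝ) * N * d₁),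
    (by positivity : (0:ℝ) ≤ (L:ℝ) * N * N * B₁ * d₁),
    (by positivity : (0:ℝ) ≤ (L:ℝ) * N * B₁ * d₀),
    (by positivity : (0:ℝ) ≤ (L:ℝ) * N * B₁ * |x| * d₀),
    (by positivity : (0:ℝ) ≤ (L:ℝ) * N * B₀ * d₁),
    (by positivity : (0:ℝ) ≤ M * d₀),
    (by positivity : (0:ℝ) ≤ M * |x| * d₀),
    (by positivity : (0:ℝ) ≤ M * N * d₁),
    (by positivity : (0:ℝ) ≤ |x| * d₀),
    (by positivity : (0:ℝ) ≤ N * d₁)]
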